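/- arXiv:2310.08531 — 5 statements merged into one kernel-verified Lean document; each statement's English description precedes it below -/
import Mathlib

section
/- If ẑ is the third component of an infinitesimal isometry of the smooth graph x(u,v) = (u, v, z(u,v)), then ẑ satisfies the linearized Monge–Ampère equation z₁₁ẑ₂₂ + z₂₂ẑ₁₁ − 2z₁₂ẑ₁₂ = 0. -/
open MeasureTheory Matrix

/-- First partial derivative of a scalar function. -/
noncomputable def pd1 (f : ℝ × ℝ → ℝ) (p : ℝ × ℝ) : ℝ := fderiv ℝ f p (1, 0)

/-- Second partial derivative of a scalar function. -/
noncomputable def pd2 (f : ℝ × ℝ → ℝ) (p : ℝ × ℝ) : ℝ := fderiv ℝ f p (0, 1)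

/-- Partial derivative in `u` of an `ℝ³`-valued map. -/
noncomputable def vd1 (f : ℝ × ℝ → Fin 3 → ℝ) (p : ℝ × ℝ) : Fin 3 → ℝ := fderiv ℝ f p (1, 0)

/-- Partial derivative in `v` of an `ℝ³`-valued map. -/
noncomputable def vd2 (f : ℝ × ℝ → Fin 3 → ℝ) (p : ℝ × ℝ) : Fin 3 → ℝ := fderiv ℝ f p (0, 1)

/-- Linearized Monge–Ampère operator. -/
noncomputable def Mop (z w : ℝ × ℝ → ℝ) (p : ℝ × ℝ) : ℝ :=
  pd1 (pd1 z) p * pd2 (pd2 w) p + pd2 (pd2 z) p * pd1 (pd1 w) p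
    - 2 * pd1 (pd2 z) p * pd1 (pd2 w) p

section Aux

lemma contDiff_pd1 {f : ℝ × ℝ → ℝ} {m n : WithTop ℕ∞} (hf : ContDiff ℝ n f) (h : m + 1 ≤ n) :
    ContDiff ℝ m (pd1 f) :=
  (hf.fderiv_right h).clm_apply contDiff_const

lemma contDiff_pd2 {f : ℝ × ℝ → ℝ} {m n : WithTop ℕ∞} (hf : ContDiff ℝ n f) (h : m + 1 ≤ n) :
    ContDiff ℝ m (pd2 f) :=
  (hf.fderiv_right h).clm_apply contDiff_const

lemma pd1_addP {f g : ℝ × ℝ → ℝ} {p} (hf : DifferentiableAt ℝ f p) (hg : DifferentiableAt ℝ g p) :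
    pd1 (fun q => f q + g q) p = pd1 f p + pd1 g p := by
  simp [pd1, fderiv_fun_add hf hg]

lemma pd2_addP {f g : ℝ × ℝ → ℝ} {p} (hf : DifferentiableAt ℝ f p) (hg : DifferentiableAt ℝ g p) :
    pd2 (fun q => f q + g q) p = pd2 f p + pd2 g p := by
  simp [pd2, fderiv_fun_add hf hg]

lemma pd1_mulP {f g : ℝ × ℝ → ℝ} {p} (hf : DifferentiableAt ℝ f p) (hg : DifferentiableAt ℝ g p) :
    pd1 (fun q => f q * g q) p = pd1 f p * g p + f p * pd1 g p := by
  simp [pd1, fderiv_fun_mul hf hg]; ring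

lemma pd2_mulP {f g : ℝ × ℝ → ℝ} {p} (hf : DifferentiableAt ℝ f p) (hg : DifferentiableAt ℝ g p) :
    pd2 (fun q => f q * g q) p = pd2 f p * g p + f p * pd2 g p := by
  simp [pd2, fderiv_fun_mul hf hg]; ring

lemma pd_swapP {f : ℝ × ℝ → ℝ} (hf : ContDiff ℝ 2 f) (p : ℝ × ℝ) :
    pd2 (pd1 f) p = pd1 (pd2 f) p := by
  have hd : DifferentiableAt ℝ (fderiv ℝ f) p :=
    ((hf.fderiv_right (m := 1) (by norm_num)).differentiable (by norm_num)) p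
  have h1 : pd2 (pd1 f) p = fderiv ℝ (fderiv ℝ f) p (0,1) (1,0) := by
    show fderiv ℝ (fun q => fderiv ℝ f q (1,0)) p (0,1) = _
    rw [fderiv_clm_apply hd (differentiableAt_const _)]
    simp
  have h2 : pd1 (pd2 f) p = fderiv ℝ (fderiv ℝ f) p (1,0) (0,1) := by
    show fderiv ℝ (fun q => fderiv ℝ f q (0,1)) p (1,0) = _
    rw [fderiv_clm_apply hd (differentiableAt_const _)]
    simp
  rw [h1, h2, (hf.contDiffAt.isSymmSndFDerivAt (by simp [minSmoothness_of_isRCLikeNormedField])).eq]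

lemma vd1_eq {f g h : ℝ × ℝ → ℝ} {p} (hf : DifferentiableAt ℝ f p)
    (hg : DifferentiableAt ℝ g p) (hh : DifferentiableAt ℝ h p) :
    vd1 (fun q => ![f q, g q, h q]) p = ![pd1 f p, pd1 g p, pd1 h p] := by
  have key : (fun q => ![f q, g q, h q]) = (fun q i => ![f, g, h] i q) := by
    funext q i; fin_cases i <;> rfl
  have hd : ∀ i : Fin 3, DifferentiableAt ℝ (![f, g, h] i) p := by
    intro i; fin_cases i <;> simpa
  show fderiv ℝ (fun q => ![f q, g q, h q]) p (1,0) = _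
  rw [key, fderiv_pi hd]
  funext i
  fin_cases i <;> simp [pd1]

lemma vd2_eq {f g h : ℝ × ℝ → ℝ} {p} (hf : DifferentiableAt ℝ f p)
    (hg : DifferentiableAt ℝ g p) (hh : DifferentiableAt ℝ h p) :
    vd2 (fun q => ![f q, g q, h q]) p = ![pd2 f p, pd2 g p, pd2 h p] := by
  have key : (fun q => ![f q, g q, h q]) = (fun q i => ![f, g, h] i q) := by
    funext q i; fin_cases i <;> rfl
  have hd : ∀ i : Fin 3, DifferentiableAt ℝ (![f, g, h] i) p := by
    intro i; fin_cases i <;> simpa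
  show fderiv ℝ (fun q => ![f q, g q, h q]) p (0,1) = _
  rw [key, fderiv_pi hd]
  funext i
  fin_cases i <;> simp [pd2]

lemma pd1_fst {p : ℝ × ℝ} : pd1 (fun q => q.1) p = 1 := by
  show fderiv ℝ Prod.fst p (1,0) = 1
  rw [fderiv_fst]; rfl

lemma pd2_fst {p : ℝ × ℝ} : pd2 (fun q => q.1) p = 0 := by
  show fderiv ℝ Prod.fst p (0,1) = 0
  rw [fderiv_fst]; rfl

lemma pd1_snd {p : ℝ × ℝ} : pd1 (fun q => q.2) p = 0 := by
  show fderiv ℝ Prod.snd p (1,0) = 0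
  rw [fderiv_snd]; rfl

lemma pd2_snd {p : ℝ × ℝ} : pd2 (fun q => q.2) p = 1 := by
  show fderiv ℝ Prod.snd p (0,1) = 1
  rw [fderiv_snd]; rfl

end Aux

/-- the vertical component of an infinitesimal isometry of a
smooth graph satisfies the linearized Monge–Ampère equation `M_z ẑ = 0`. -/
theorem stmt6 (z xh yh zh : ℝ × ℝ → ℝ)
    (hz : ContDiff ℝ 3 z) (hxh : ContDiff ℝ (⊤ : ℕ∞) xh) (hyh : ContDiff ℝ (⊤ : ℕ∞) yh)
    (hzh : ContDiff ℝ (⊤ : ℕ∞) zh)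
    (hiso : ∀ p,
      vd1 (fun q => ![xh q, yh q, zh q]) p ⬝ᵥ vd1 (fun q => ![q.1, q.2, z q]) p = 0 ∧
      vd2 (fun q => ![xh q, yh q, zh q]) p ⬝ᵥ vd2 (fun q => ![q.1, q.2, z q]) p = 0 ∧
      vd1 (fun q => ![xh q, yh q, zh q]) p ⬝ᵥ vd2 (fun q => ![q.1, q.2, z q]) p
        + vd2 (fun q => ![xh q, yh q, zh q]) p ⬝ᵥ vd1 (fun q => ![q.1, q.2, z q]) p = 0) :
    ∀ p, Mop z zh p = 0 := by
  -- everything we use is C³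
  have hx3 : ContDiff ℝ 3 xh := hxh.of_le (WithTop.coe_le_coe.mpr le_top)
  have hy3 : ContDiff ℝ 3 yh := hyh.of_le (WithTop.coe_le_coe.mpr le_top)
  have hh3 : ContDiff ℝ 3 zh := hzh.of_le (WithTop.coe_le_coe.mpr le_top)
  have h31 : (2 : WithTop ℕ∞) + 1 ≤ 3 := by norm_num
  have h21 : (1 : WithTop ℕ∞) + 1 ≤ 2 := by norm_num
  -- smoothness of first partials
  have cz1 : ContDiff ℝ 2 (pd1 z) := contDiff_pd1 hz h31
  have cz2 : ContDiff ℝ 2 (pd2 z) := contDiff_pd2 hz h31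
  have cx1 : ContDiff ℝ 2 (pd1 xh) := contDiff_pd1 hx3 h31
  have cx2 : ContDiff ℝ 2 (pd2 xh) := contDiff_pd2 hx3 h31
  have cy1 : ContDiff ℝ 2 (pd1 yh) := contDiff_pd1 hy3 h31
  have cy2 : ContDiff ℝ 2 (pd2 yh) := contDiff_pd2 hy3 h31
  have ch1 : ContDiff ℝ 2 (pd1 zh) := contDiff_pd1 hh3 h31
  have ch2 : ContDiff ℝ 2 (pd2 zh) := contDiff_pd2 hh3 h31
  -- differentiability facts
  have dz : Differentiable ℝ z := hz.differentiable (by norm_num)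
  have dxh : Differentiable ℝ xh := hx3.differentiable (by norm_num)
  have dyh : Differentiable ℝ yh := hy3.differentiable (by norm_num)
  have dzh : Differentiable ℝ zh := hh3.differentiable (by norm_num)
  have dz1 : Differentiable ℝ (pd1 z) := cz1.differentiable (by norm_num)
  have dz2 : Differentiable ℝ (pd2 z) := cz2.differentiable (by norm_num)
  have dx1 : Differentiable ℝ (pd1 xh) := cx1.differentiable (by norm_num)
  have dx2 : Differentiable ℝ (pd2 xh) := cx2.differentiable (by norm_num)
  have dy1 : Differentiable ℝ (pd1 yh) := cy1.differentiable (by norm_num)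
  have dy2 : Differentiable ℝ (pd2 yh) := cy2.differentiable (by norm_num)
  have dh1 : Differentiable ℝ (pd1 zh) := ch1.differentiable (by norm_num)
  have dh2 : Differentiable ℝ (pd2 zh) := ch2.differentiable (by norm_num)
  have dz11 : Differentiable ℝ (pd1 (pd1 z)) :=
    (contDiff_pd1 cz1 h21).differentiable (by norm_num)
  have dz12 : Differentiable ℝ (pd2 (pd1 z)) :=
    (contDiff_pd2 cz1 h21).differentiable (by norm_num)
  have dz21 : Differentiable ℝ (pd1 (pd2 z)) :=
    (contDiff_pd1 cz2 h21).differentiable (by norm_num)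
  have dz22 : Differentiable ℝ (pd2 (pd2 z)) :=
    (contDiff_pd2 cz2 h21).differentiable (by norm_num)
  have dx12 : Differentiable ℝ (pd2 (pd1 xh)) :=
    (contDiff_pd2 cx1 h21).differentiable (by norm_num)
  have dx22 : Differentiable ℝ (pd2 (pd2 xh)) :=
    (contDiff_pd2 cx2 h21).differentiable (by norm_num)
  have dy12 : Differentiable ℝ (pd2 (pd1 yh)) :=
    (contDiff_pd2 cy1 h21).differentiable (by norm_num)
  have dy21 : Differentiable ℝ (pd1 (pd2 yh)) :=
    (contDiff_pd1 cy2 h21).differentiable (by norm_num)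
  have dh11 : Differentiable ℝ (pd1 (pd1 zh)) :=
    (contDiff_pd1 ch1 h21).differentiable (by norm_num)
  have dh12 : Differentiable ℝ (pd2 (pd1 zh)) :=
    (contDiff_pd2 ch1 h21).differentiable (by norm_num)
  have dh21 : Differentiable ℝ (pd1 (pd2 zh)) :=
    (contDiff_pd1 ch2 h21).differentiable (by norm_num)
  have dh22 : Differentiable ℝ (pd2 (pd2 zh)) :=
    (contDiff_pd2 ch2 h21).differentiable (by norm_num)
  -- the three scalar isometry equations
  have EA : ∀ q, pd1 xh q + pd1 zh q * pd1 z q = 0 := by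
    intro q
    obtain ⟨h1, -, -⟩ := hiso q
    rw [vd1_eq (dxh q) (dyh q) (dzh q),
        vd1_eq differentiableAt_fst differentiableAt_snd (dz q)] at h1
    simp [dotProduct, Fin.sum_univ_three, pd1_fst, pd1_snd] at h1
    linear_combination h1
  have EB : ∀ q, pd2 yh q + pd2 zh q * pd2 z q = 0 := by
    intro q
    obtain ⟨-, h2, -⟩ := hiso q
    rw [vd2_eq (dxh q) (dyh q) (dzh q),
        vd2_eq differentiableAt_fst differentiableAt_snd (dz q)] at h2
    simp [dotProduct, Fin.sum_univ_three, pd2_fst, pd2_snd] at h2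
    linear_combination h2
  have EC : ∀ q, (pd2 xh q + pd1 yh q) + (pd2 zh q * pd1 z q + pd1 zh q * pd2 z q) = 0 := by
    intro q
    obtain ⟨-, -, h3⟩ := hiso q
    rw [vd1_eq (dxh q) (dyh q) (dzh q), vd2_eq (dxh q) (dyh q) (dzh q),
        vd1_eq differentiableAt_fst differentiableAt_snd (dz q),
        vd2_eq differentiableAt_fst differentiableAt_snd (dz q)] at h3
    simp [dotProduct, Fin.sum_univ_three, pd1_fst, pd1_snd, pd2_fst, pd2_snd] at h3
    linear_combination h3
  -- first differentiation
  have EA' : ∀ q, pd2 (pd1 xh) q +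
      (pd2 (pd1 zh) q * pd1 z q + pd1 zh q * pd2 (pd1 z) q) = 0 := by
    intro q
    have h0 : pd2 (fun r => pd1 xh r + pd1 zh r * pd1 z r) q = 0 := by
      rw [show (fun r => pd1 xh r + pd1 zh r * pd1 z r) = (fun _ => (0:ℝ)) from funext EA]
      simp [pd2]
    rw [pd2_addP (dx1 q) ((dh1 q).fun_mul (dz1 q)), pd2_mulP (dh1 q) (dz1 q)] at h0
    linarith
  have EB' : ∀ q, pd1 (pd2 yh) q +
      (pd1 (pd2 zh) q * pd2 z q + pd2 zh q * pd1 (pd2 z) q) = 0 := by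
    intro q
    have h0 : pd1 (fun r => pd2 yh r + pd2 zh r * pd2 z r) q = 0 := by
      rw [show (fun r => pd2 yh r + pd2 zh r * pd2 z r) = (fun _ => (0:ℝ)) from funext EB]
      simp [pd1]
    rw [pd1_addP (dy2 q) ((dh2 q).fun_mul (dz2 q)), pd1_mulP (dh2 q) (dz2 q)] at h0
    linarith
  have EC' : ∀ q, (pd2 (pd2 xh) q + pd2 (pd1 yh) q) +
      ((pd2 (pd2 zh) q * pd1 z q + pd2 zh q * pd2 (pd1 z) q) +
       (pd2 (pd1 zh) q * pd2 z q + pd1 zh q * pd2 (pd2 z) q)) = 0 := by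
    intro q
    have h0 : pd2 (fun r => (pd2 xh r + pd1 yh r) +
        (pd2 zh r * pd1 z r + pd1 zh r * pd2 z r)) q = 0 := by
      rw [show (fun r => (pd2 xh r + pd1 yh r) + (pd2 zh r * pd1 z r + pd1 zh r * pd2 z r))
            = (fun _ => (0:ℝ)) from funext EC]
      simp [pd2]
    rw [pd2_addP ((dx2 q).fun_add (dy1 q)) (((dh2 q).fun_mul (dz1 q)).fun_add ((dh1 q).fun_mul (dz2 q))),
        pd2_addP (dx2 q) (dy1 q),
        pd2_addP ((dh2 q).fun_mul (dz1 q)) ((dh1 q).fun_mul (dz2 q)),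
        pd2_mulP (dh2 q) (dz1 q), pd2_mulP (dh1 q) (dz2 q)] at h0
    linarith
  -- second differentiation, at the given point
  intro p
  have hA : pd2 (pd2 (pd1 xh)) p +
      ((pd2 (pd2 (pd1 zh)) p * pd1 z p + pd2 (pd1 zh) p * pd2 (pd1 z) p) +
       (pd2 (pd1 zh) p * pd2 (pd1 z) p + pd1 zh p * pd2 (pd2 (pd1 z)) p)) = 0 := by
    have h0 : pd2 (fun r => pd2 (pd1 xh) r +
        (pd2 (pd1 zh) r * pd1 z r + pd1 zh r * pd2 (pd1 z) r)) p = 0 := by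
      rw [show (fun r => pd2 (pd1 xh) r + (pd2 (pd1 zh) r * pd1 z r + pd1 zh r * pd2 (pd1 z) r))
            = (fun _ => (0:ℝ)) from funext EA']
      simp [pd2]
    rw [pd2_addP (dx12 p) (((dh12 p).fun_mul (dz1 p)).fun_add ((dh1 p).fun_mul (dz12 p))),
        pd2_addP ((dh12 p).fun_mul (dz1 p)) ((dh1 p).fun_mul (dz12 p)),
        pd2_mulP (dh12 p) (dz1 p), pd2_mulP (dh1 p) (dz12 p)] at h0
    linarith
  have hB : pd1 (pd1 (pd2 yh)) p +
      ((pd1 (pd1 (pd2 zh)) p * pd2 z p + pd1 (pd2 zh) p * pd1 (pd2 z) p) +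
       (pd1 (pd2 zh) p * pd1 (pd2 z) p + pd2 zh p * pd1 (pd1 (pd2 z)) p)) = 0 := by
    have h0 : pd1 (fun r => pd1 (pd2 yh) r +
        (pd1 (pd2 zh) r * pd2 z r + pd2 zh r * pd1 (pd2 z) r)) p = 0 := by
      rw [show (fun r => pd1 (pd2 yh) r + (pd1 (pd2 zh) r * pd2 z r + pd2 zh r * pd1 (pd2 z) r))
            = (fun _ => (0:ℝ)) from funext EB']
      simp [pd1]
    rw [pd1_addP (dy21 p) (((dh21 p).fun_mul (dz2 p)).fun_add ((dh2 p).fun_mul (dz21 p))),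
        pd1_addP ((dh21 p).fun_mul (dz2 p)) ((dh2 p).fun_mul (dz21 p)),
        pd1_mulP (dh21 p) (dz2 p), pd1_mulP (dh2 p) (dz21 p)] at h0
    linarith
  have hC : (pd1 (pd2 (pd2 xh)) p + pd1 (pd2 (pd1 yh)) p) +
      ((pd1 (pd2 (pd2 zh)) p * pd1 z p + pd2 (pd2 zh) p * pd1 (pd1 z) p) +
       (pd1 (pd2 zh) p * pd2 (pd1 z) p + pd2 zh p * pd1 (pd2 (pd1 z)) p) +
       ((pd1 (pd2 (pd1 zh)) p * pd2 z p + pd2 (pd1 zh) p * pd1 (pd2 z) p) +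
        (pd1 (pd1 zh) p * pd2 (pd2 z) p + pd1 zh p * pd1 (pd2 (pd2 z)) p))) = 0 := by
    have h0 : pd1 (fun r => (pd2 (pd2 xh) r + pd2 (pd1 yh) r) +
        ((pd2 (pd2 zh) r * pd1 z r + pd2 zh r * pd2 (pd1 z) r) +
         (pd2 (pd1 zh) r * pd2 z r + pd1 zh r * pd2 (pd2 z) r))) p = 0 := by
      rw [show (fun r => (pd2 (pd2 xh) r + pd2 (pd1 yh) r) +
            ((pd2 (pd2 zh) r * pd1 z r + pd2 zh r * pd2 (pd1 z) r) +
             (pd2 (pd1 zh) r * pd2 z r + pd1 zh r * pd2 (pd2 z) r)))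
            = (fun _ => (0:ℝ)) from funext EC']
      simp [pd1]
    rw [pd1_addP ((dx22 p).fun_add (dy12 p))
          ((((dh22 p).fun_mul (dz1 p)).fun_add ((dh2 p).fun_mul (dz12 p))).fun_add
           (((dh12 p).fun_mul (dz2 p)).fun_add ((dh1 p).fun_mul (dz22 p)))),
        pd1_addP (dx22 p) (dy12 p),
        pd1_addP (((dh22 p).fun_mul (dz1 p)).fun_add ((dh2 p).fun_mul (dz12 p)))
          (((dh12 p).fun_mul (dz2 p)).fun_add ((dh1 p).fun_mul (dz22 p))),
        pd1_addP ((dh22 p).fun_mul (dz1 p)) ((dh2 p).fun_mul (dz12 p)),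
        pd1_addP ((dh12 p).fun_mul (dz2 p)) ((dh1 p).fun_mul (dz22 p)),
        pd1_mulP (dh22 p) (dz1 p), pd1_mulP (dh2 p) (dz12 p),
        pd1_mulP (dh12 p) (dz2 p), pd1_mulP (dh1 p) (dz22 p)] at h0
    linarith
  -- symmetry of mixed partials
  have hz2' : ContDiff ℝ 2 z := hz.of_le (by norm_num)
  have hx2' : ContDiff ℝ 2 xh := hx3.of_le (by norm_num)
  have hy2' : ContDiff ℝ 2 yh := hy3.of_le (by norm_num)
  have hh2' : ContDiff ℝ 2 zh := hh3.of_le (by norm_num)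
  have swz : pd2 (pd1 z) = pd1 (pd2 z) := funext (pd_swapP hz2')
  have swh : pd2 (pd1 zh) = pd1 (pd2 zh) := funext (pd_swapP hh2')
  have swx : pd2 (pd1 xh) = pd1 (pd2 xh) := funext (pd_swapP hx2')
  have swy : pd2 (pd1 yh) = pd1 (pd2 yh) := funext (pd_swapP hy2')
  -- third-order swaps at p
  have s3 : pd2 (pd2 (pd1 z)) p = pd1 (pd2 (pd2 z)) p := by
    rw [swz]; exact pd_swapP cz2 p
  have s4 : pd1 (pd1 (pd2 z)) p = pd1 (pd2 (pd1 z)) p := by rw [swz]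
  have s5 : pd2 (pd2 (pd1 zh)) p = pd1 (pd2 (pd2 zh)) p := by
    rw [swh]; exact pd_swapP ch2 p
  have s6 : pd1 (pd1 (pd2 zh)) p = pd1 (pd2 (pd1 zh)) p := by rw [swh]
  have sx : pd2 (pd2 (pd1 xh)) p = pd1 (pd2 (pd2 xh)) p := by
    rw [swx]; exact pd_swapP cx2 p
  have sy : pd1 (pd1 (pd2 yh)) p = pd1 (pd2 (pd1 yh)) p := by rw [swy]
  -- second-order swaps at p
  have t1 : pd2 (pd1 z) p = pd1 (pd2 z) p := pd_swapP hz2' p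
  have t2 : pd2 (pd1 zh) p = pd1 (pd2 zh) p := pd_swapP hh2' p
  rw [s3, s5, sx] at hA
  rw [s4, s6, sy] at hB
  simp only [t1, t2] at hA hB hC
  simp only [Mop]
  linear_combination hC - hA - hB
end

section
/- Let a, b : ℝ → ℝ be smooth periodic functions and define the surface of translation x(u,v) = (u, v, a(u) + b(v)). Then the map ẋ(u,v) = (−∫₀ᵘ a'(s)² ds, ∫₀ᵛ b'(s)² ds, a(u) − b(v)) is an infinitesimal isometry of x, i.e., ⟨ẋ_μ, x_ν⟩ + ⟨ẋ_ν, x_μ⟩ = 0 for all μ, ν ∈ {1,2}. -/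
open MeasureTheory Matrix

noncomputable abbrev fstL : ℝ × ℝ →L[ℝ] ℝ := ContinuousLinearMap.fst ℝ ℝ ℝ
noncomputable abbrev sndL : ℝ × ℝ →L[ℝ] ℝ := ContinuousLinearMap.snd ℝ ℝ ℝ

/-- the map `ẋ(u,v) = (−∫₀ᵘ a'², ∫₀ᵛ b'², a(u) − b(v))` is an
infinitesimal isometry of the surface of translation `x(u,v) = (u,v,a(u)+b(v))`. -/
theorem stmt7 (a b : ℝ → ℝ) (Ta Tb : ℝ) (hTa : Ta ≠ 0) (hTb : Tb ≠ 0)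
    (ha : ContDiff ℝ (⊤ : ℕ∞) a) (hb : ContDiff ℝ (⊤ : ℕ∞) b)
    (hpa : Function.Periodic a Ta) (hpb : Function.Periodic b Tb) :
    ∀ p, ∀ μ ν : Fin 2,
      fderiv ℝ (fun q : ℝ × ℝ =>
          ![-(∫ s in (0:ℝ)..q.1, (deriv a s) ^ 2),
            ∫ s in (0:ℝ)..q.2, (deriv b s) ^ 2,
            a q.1 - b q.2]) p (![((1:ℝ),(0:ℝ)), ((0:ℝ),(1:ℝ))] μ)
        ⬝ᵥ fderiv ℝ (fun q : ℝ × ℝ => ![q.1, q.2, a q.1 + b q.2]) p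
            (![((1:ℝ),(0:ℝ)), ((0:ℝ),(1:ℝ))] ν)
      + fderiv ℝ (fun q : ℝ × ℝ =>
          ![-(∫ s in (0:ℝ)..q.1, (deriv a s) ^ 2),
            ∫ s in (0:ℝ)..q.2, (deriv b s) ^ 2,
            a q.1 - b q.2]) p (![((1:ℝ),(0:ℝ)), ((0:ℝ),(1:ℝ))] ν)
        ⬝ᵥ fderiv ℝ (fun q : ℝ × ℝ => ![q.1, q.2, a q.1 + b q.2]) p
            (![((1:ℝ),(0:ℝ)), ((0:ℝ),(1:ℝ))] μ) = 0 := by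
  intro p μ ν
  set A := deriv a p.1 with hA
  set B := deriv b p.2 with hB
  have hDa : HasDerivAt a A p.1 := (ha.differentiable (by simp) p.1).hasDerivAt
  have hDb : HasDerivAt b B p.2 := (hb.differentiable (by simp) p.2).hasDerivAt
  have hca : Continuous fun s => (deriv a s) ^ 2 :=
    (ha.continuous_deriv (by simp)).pow 2
  have hcb : Continuous fun s => (deriv b s) ^ 2 :=
    (hb.continuous_deriv (by simp)).pow 2
  have hIa : HasDerivAt (fun t => ∫ s in (0:ℝ)..t, (deriv a s) ^ 2) (A ^ 2) p.1 :=
    (hca.integral_hasStrictDerivAt 0 p.1).hasDerivAt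
  have hIb : HasDerivAt (fun t => ∫ s in (0:ℝ)..t, (deriv b s) ^ 2) (B ^ 2) p.2 :=
    (hcb.integral_hasStrictDerivAt 0 p.2).hasDerivAt
  -- components of ẋ
  have h0 : HasFDerivAt (fun q : ℝ × ℝ => -(∫ s in (0:ℝ)..q.1, (deriv a s) ^ 2))
      (-(A ^ 2 • fstL)) p := (hIa.comp_hasFDerivAt p (hasFDerivAt_fst)).neg
  have h1 : HasFDerivAt (fun q : ℝ × ℝ => ∫ s in (0:ℝ)..q.2, (deriv b s) ^ 2)
      (B ^ 2 • sndL) p := hIb.comp_hasFDerivAt p (hasFDerivAt_snd)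
  have h2 : HasFDerivAt (fun q : ℝ × ℝ => a q.1 - b q.2)
      (A • fstL - B • sndL) p :=
    (hDa.comp_hasFDerivAt p hasFDerivAt_fst).sub (hDb.comp_hasFDerivAt p hasFDerivAt_snd)
  -- components of x
  have g2 : HasFDerivAt (fun q : ℝ × ℝ => a q.1 + b q.2)
      (A • fstL + B • sndL) p :=
    (hDa.comp_hasFDerivAt p hasFDerivAt_fst).add (hDb.comp_hasFDerivAt p hasFDerivAt_snd)
  have hX : HasFDerivAt (fun q : ℝ × ℝ =>
      ![-(∫ s in (0:ℝ)..q.1, (deriv a s) ^ 2),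
        ∫ s in (0:ℝ)..q.2, (deriv b s) ^ 2,
        a q.1 - b q.2])
      (ContinuousLinearMap.pi ![-(A ^ 2 • fstL), B ^ 2 • sndL, A • fstL - B • sndL]) p := by
    rw [hasFDerivAt_pi']
    intro i
    fin_cases i <;> simp [ContinuousLinearMap.proj_pi] <;>
      first
        | exact h0
        | exact h1
        | exact h2
  have hY : HasFDerivAt (fun q : ℝ × ℝ => ![q.1, q.2, a q.1 + b q.2])
      (ContinuousLinearMap.pi ![fstL, sndL, A • fstL + B • sndL]) p := by
    rw [hasFDerivAt_pi']
    intro i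
    fin_cases i <;> simp [ContinuousLinearMap.proj_pi] <;>
      first
        | exact hasFDerivAt_fst
        | exact hasFDerivAt_snd
        | exact g2
  rw [hX.fderiv, hY.fderiv]
  fin_cases μ <;> fin_cases ν <;>
    simp [dotProduct, Fin.sum_univ_three, ContinuousLinearMap.pi_apply] <;> ring
end

section
/- Let a : ℝ × ℝ → ℝ be continuous and periodic of period 1 in its second variable. Suppose that for some constant C > 0 and all sufficiently small ε > 0 and all u in a fixed interval, |a(u, u/ε)| ≤ Cε. Then a(u, ξ) = 0 for all u in the interval and all ξ. -/
/-!
For `u ≠ 0` the fast variable `u / ε` sweeps through every coset `ξ + ℤ` infinitely often as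
`ε → 0⁺`, so periodicity turns the bound `|a(u, u/ε)| ≤ C ε` into `|a(u, ξ)| ≤ C ε` for
arbitrarily small `ε`. The remaining point `u = 0` follows by continuity in `u`.
-/

open Set Function

lemma exists_div_eq_add_int_of_pos {u m : ℝ} (hu : 0 < u) (hm : 0 < m) (ξ : ℝ) :
    ∃ ε ∈ Ioo 0 m, ∃ n : ℤ, u / ε = ξ + n := by
  obtain ⟨n, hn⟩ := exists_int_gt (u / m - ξ)
  have hum : 0 < u / m := div_pos hu hm
  have ht : u / m < ξ + n := by linarith
  refine ⟨u / (ξ + n), ⟨div_pos hu (by linarith), ?_⟩, n, div_div_cancel₀ hu.ne'⟩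
  rwa [div_lt_comm₀ (by linarith) hm]

lemma exists_div_eq_add_int {u m : ℝ} (hu : u ≠ 0) (hm : 0 < m) (ξ : ℝ) :
    ∃ ε ∈ Ioo 0 m, ∃ n : ℤ, u / ε = ξ + n := by
  rcases hu.lt_or_gt with hneg | hpos
  · obtain ⟨ε, hε, n, hn⟩ := exists_div_eq_add_int_of_pos (neg_pos.2 hneg) hm (-ξ)
    refine ⟨ε, hε, -n, ?_⟩
    rw [neg_div] at hn
    push_cast
    linarith
  · exact exists_div_eq_add_int_of_pos hpos hm ξ

lemma Function.Periodic.eq_zero_of_abs_apply_div_le {f : ℝ → ℝ} (hf : Periodic f 1) {u : ℝ}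
    (hu : u ≠ 0) {C ε₀ : ℝ} (hC : 0 < C) (hε₀ : 0 < ε₀)
    (hbound : ∀ ε, 0 < ε → ε < ε₀ → |f (u / ε)| ≤ C * ε) (ξ : ℝ) : f ξ = 0 := by
  suffices h : ∀ δ > 0, |f ξ| ≤ 0 + δ from abs_nonpos_iff.1 (le_of_forall_pos_le_add h)
  intro δ hδ
  obtain ⟨ε, ⟨hε, hεm⟩, n, hn⟩ :=
    exists_div_eq_add_int hu (lt_min hε₀ (div_pos hδ hC)) ξ
  have hperiod : f (u / ε) = f ξ := by
    rw [hn, ← mul_one (n : ℝ)]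
    exact hf.int_mul n ξ
  calc |f ξ| = |f (u / ε)| := by rw [hperiod]
    _ ≤ C * ε := hbound ε hε (hεm.trans_le (min_le_left _ _))
    _ ≤ C * (δ / C) := by gcongr; exact hεm.le.trans (min_le_right _ _)
    _ = 0 + δ := by field_simp; ring

lemma Icc_subset_closure_diff_singleton {α β : ℝ} (hαβ : α < β) (x : ℝ) :
    Icc α β ⊆ closure (Icc α β \ {x}) := by
  calc Icc α β = closure (Ioo α β) := (closure_Ioo hαβ.ne).symm
    _ ⊆ closure (Ioo α β ∩ {x}ᶜ) := closure_minimal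
        ((dense_compl_singleton x).open_subset_closure_inter isOpen_Ioo) isClosed_closure
    _ ⊆ closure (Icc α β \ {x}) := closure_mono (inter_subset_inter_left _ Ioo_subset_Icc_self)

/-- two-scale localization lemma. If `a(u, ξ)` is continuous,
`1`-periodic in `ξ`, and `a(u, u/ε) = O(ε)` uniformly for `u` in an interval,
then `a` vanishes on that interval (for all `ξ`). -/
theorem stmt12 (a : ℝ → ℝ → ℝ)
    (hcont : Continuous fun q : ℝ × ℝ => a q.1 q.2)
    (hper : ∀ u ξ, a u (ξ + 1) = a u ξ)
    (α β : ℝ) (hαβ : α < β)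
    (C : ℝ) (hC : 0 < C) (ε₀ : ℝ) (hε₀ : 0 < ε₀)
    (hbound : ∀ ε : ℝ, 0 < ε → ε < ε₀ → ∀ u ∈ Set.Icc α β, |a u (u / ε)| ≤ C * ε) :
    ∀ u ∈ Set.Icc α β, ∀ ξ, a u ξ = 0 := by
  intro u hu ξ
  have hzero : EqOn (fun u => a u ξ) 0 (Icc α β \ {0}) := fun u ⟨huI, hu0⟩ =>
    Periodic.eq_zero_of_abs_apply_div_le (hper u) hu0 hC hε₀
      (fun ε hε hεε₀ => hbound ε hε hεε₀ u huI) ξ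
  have hcontξ : Continuous fun u => a u ξ := hcont.comp (continuous_id.prodMk continuous_const)
  exact hzero.of_subset_closure hcontξ.continuousOn continuousOn_const sdiff_subset
    (Icc_subset_closure_diff_singleton hαβ 0) hu
end

section
/- Let x : ℝ² → ℝ³ be a smooth surface (x_u, x_v linearly independent) and ẋ a smooth map such that ⟨ẋ_u, x_u⟩ = ⟨ẋ_v, x_v⟩ = 0 and ⟨ẋ_u, x_v⟩ + ⟨ẋ_v, x_u⟩ = 0 (infinitesimal isometry). Then there exists a unique vector field w : ℝ² → ℝ³ such that ẋ_u = w × x_u and ẋ_v = w × x_v. -/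
open MeasureTheory Matrix

/-- Candidate rotation vector. -/
noncomputable def Wfield (a b pv qv : Fin 3 → ℝ) : Fin 3 → ℝ :=
  ((a ⨯₃ b) ⬝ᵥ (a ⨯₃ b))⁻¹ •
    ((qv ⬝ᵥ (a ⨯₃ b)) • a - (pv ⬝ᵥ (a ⨯₃ b)) • b + (pv ⬝ᵥ b) • (a ⨯₃ b))

lemma nn_ne_zero {a b : Fin 3 → ℝ} (h : LinearIndependent ℝ ![a, b]) :
    (a ⨯₃ b) ⬝ᵥ (a ⨯₃ b) ≠ 0 := by
  have hn : a ⨯₃ b ≠ 0 := crossProduct_ne_zero_iff_linearIndependent.mpr h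
  intro h0
  exact hn (dotProduct_self_eq_zero.mp h0)

lemma dots_zero {a b v : Fin 3 → ℝ} (hnn : (a ⨯₃ b) ⬝ᵥ (a ⨯₃ b) ≠ 0)
    (h1 : v ⬝ᵥ a = 0) (h2 : v ⬝ᵥ b = 0) (h3 : v ⬝ᵥ (a ⨯₃ b) = 0) : v = 0 := by
  funext i
  have key : ((a ⨯₃ b) ⬝ᵥ (a ⨯₃ b)) * v i =
      (v ⬝ᵥ (a ⨯₃ b)) * (a ⨯₃ b) i + (v ⬝ᵥ b) * ((a ⨯₃ b) ⨯₃ a) i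
        - (v ⬝ᵥ a) * ((a ⨯₃ b) ⨯₃ b) i := by
    fin_cases i <;>
      simp [cross_apply, dotProduct, Fin.sum_univ_three, vecHead, vecTail, Pi.smul_apply, Pi.sub_apply, Pi.add_apply, smul_eq_mul] <;> ring
  rw [h1, h2, h3] at key
  simp only [zero_mul, add_zero, sub_zero] at key
  rcases mul_eq_zero.mp key with h | h
  · exact absurd h hnn
  · simpa using h

lemma Wfield_spec {a b pv qv : Fin 3 → ℝ} (hli : LinearIndependent ℝ ![a, b])
    (h1 : pv ⬝ᵥ a = 0) (h2 : qv ⬝ᵥ b = 0) (h3 : pv ⬝ᵥ b + qv ⬝ᵥ a = 0) :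
    pv = Wfield a b pv qv ⨯₃ a ∧ qv = Wfield a b pv qv ⨯₃ b := by
  have hnn := nn_ne_zero hli
  set W : Fin 3 → ℝ := (qv ⬝ᵥ (a ⨯₃ b)) • a - (pv ⬝ᵥ (a ⨯₃ b)) • b
      + (pv ⬝ᵥ b) • (a ⨯₃ b) with hW
  have hsm : ∀ u : Fin 3 → ℝ,
      Wfield a b pv qv ⨯₃ u = ((a ⨯₃ b) ⬝ᵥ (a ⨯₃ b))⁻¹ • (W ⨯₃ u) := by
    intro u
    simp only [Wfield, hW, LinearMap.map_smul, LinearMap.smul_apply]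
  have ia1 : (W ⨯₃ a) ⬝ᵥ a = 0 := by
    simp [hW, cross_apply, dotProduct, Fin.sum_univ_three, vecHead, vecTail, Pi.smul_apply, Pi.sub_apply, Pi.add_apply, smul_eq_mul]; ring
  have ia2 : (W ⨯₃ a) ⬝ᵥ b = (pv ⬝ᵥ b) * ((a ⨯₃ b) ⬝ᵥ (a ⨯₃ b)) := by
    simp [hW, cross_apply, dotProduct, Fin.sum_univ_three, vecHead, vecTail, Pi.smul_apply, Pi.sub_apply, Pi.add_apply, smul_eq_mul]; ring
  have ia3 : (W ⨯₃ a) ⬝ᵥ (a ⨯₃ b) = (pv ⬝ᵥ (a ⨯₃ b)) * ((a ⨯₃ b) ⬝ᵥ (a ⨯₃ b)) := by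
    simp [hW, cross_apply, dotProduct, Fin.sum_univ_three, vecHead, vecTail, Pi.smul_apply, Pi.sub_apply, Pi.add_apply, smul_eq_mul]; ring
  have ib1 : (W ⨯₃ b) ⬝ᵥ a = -((pv ⬝ᵥ b) * ((a ⨯₃ b) ⬝ᵥ (a ⨯₃ b))) := by
    simp [hW, cross_apply, dotProduct, Fin.sum_univ_three, vecHead, vecTail, Pi.smul_apply, Pi.sub_apply, Pi.add_apply, smul_eq_mul]; ring
  have ib2 : (W ⨯₃ b) ⬝ᵥ b = 0 := by
    simp [hW, cross_apply, dotProduct, Fin.sum_univ_three, vecHead, vecTail, Pi.smul_apply, Pi.sub_apply, Pi.add_apply, smul_eq_mul]; ring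
  have ib3 : (W ⨯₃ b) ⬝ᵥ (a ⨯₃ b) = (qv ⬝ᵥ (a ⨯₃ b)) * ((a ⨯₃ b) ⬝ᵥ (a ⨯₃ b)) := by
    simp [hW, cross_apply, dotProduct, Fin.sum_univ_three, vecHead, vecTail, Pi.smul_apply, Pi.sub_apply, Pi.add_apply, smul_eq_mul]; ring
  constructor
  · have hz : pv - Wfield a b pv qv ⨯₃ a = 0 := by
      apply dots_zero (a := a) (b := b) hnn
      · rw [sub_dotProduct, hsm, smul_dotProduct, ia1, h1]; simp
      · rw [sub_dotProduct, hsm, smul_dotProduct, ia2, smul_eq_mul,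
          mul_comm ((a ⨯₃ b) ⬝ᵥ (a ⨯₃ b))⁻¹, mul_assoc,
          mul_inv_cancel₀ hnn, mul_one, sub_self]
      · rw [sub_dotProduct, hsm, smul_dotProduct, ia3, smul_eq_mul,
          mul_comm ((a ⨯₃ b) ⬝ᵥ (a ⨯₃ b))⁻¹, mul_assoc,
          mul_inv_cancel₀ hnn, mul_one, sub_self]
    exact (sub_eq_zero.mp hz)
  · have hz : qv - Wfield a b pv qv ⨯₃ b = 0 := by
      apply dots_zero (a := a) (b := b) hnn
      · rw [sub_dotProduct, hsm, smul_dotProduct, ib1, smul_eq_mul, mul_neg,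
          mul_comm ((a ⨯₃ b) ⬝ᵥ (a ⨯₃ b))⁻¹, mul_assoc,
          mul_inv_cancel₀ hnn, mul_one, sub_neg_eq_add]
        linarith [h3]
      · rw [sub_dotProduct, hsm, smul_dotProduct, ib2, h2, smul_zero, sub_zero]
      · rw [sub_dotProduct, hsm, smul_dotProduct, ib3, smul_eq_mul,
          mul_comm ((a ⨯₃ b) ⬝ᵥ (a ⨯₃ b))⁻¹, mul_assoc,
          mul_inv_cancel₀ hnn, mul_one, sub_self]
    exact (sub_eq_zero.mp hz)

lemma cross_uniq {a b w w' : Fin 3 → ℝ} (hli : LinearIndependent ℝ ![a, b])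
    (h1 : w ⨯₃ a = w' ⨯₃ a) (h2 : w ⨯₃ b = w' ⨯₃ b) : w = w' := by
  have hnn := nn_ne_zero hli
  set z : Fin 3 → ℝ := w - w' with hzdef
  have hza : z ⨯₃ a = 0 := by
    simp only [hzdef, map_sub, LinearMap.sub_apply, h1, sub_self]
  have hzb : z ⨯₃ b = 0 := by
    simp only [hzdef, map_sub, LinearMap.sub_apply, h2, sub_self]
  have E1 : (z ⨯₃ a) ⬝ᵥ (a ⨯₃ b) = (z ⬝ᵥ a) * (a ⬝ᵥ b) - (z ⬝ᵥ b) * (a ⬝ᵥ a) := by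
    simp [cross_apply, dotProduct, Fin.sum_univ_three, vecHead, vecTail, Pi.smul_apply, Pi.sub_apply, Pi.add_apply, smul_eq_mul]; ring
  have E2 : (z ⨯₃ b) ⬝ᵥ (a ⨯₃ b) = (z ⬝ᵥ a) * (b ⬝ᵥ b) - (z ⬝ᵥ b) * (a ⬝ᵥ b) := by
    simp [cross_apply, dotProduct, Fin.sum_univ_three, vecHead, vecTail, Pi.smul_apply, Pi.sub_apply, Pi.add_apply, smul_eq_mul]; ring
  have E3 : z ⬝ᵥ (a ⨯₃ b) = (z ⨯₃ a) ⬝ᵥ b := by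
    simp [cross_apply, dotProduct, Fin.sum_univ_three, vecHead, vecTail, Pi.smul_apply, Pi.sub_apply, Pi.add_apply, smul_eq_mul]; ring
  have Enn : (a ⨯₃ b) ⬝ᵥ (a ⨯₃ b) = (a ⬝ᵥ a) * (b ⬝ᵥ b) - (a ⬝ᵥ b) * (a ⬝ᵥ b) := by
    simp [cross_apply, dotProduct, Fin.sum_univ_three, vecHead, vecTail, Pi.smul_apply, Pi.sub_apply, Pi.add_apply, smul_eq_mul]; ring
  rw [hza, zero_dotProduct] at E1
  rw [hzb, zero_dotProduct] at E2
  rw [hza, zero_dotProduct] at E3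
  have hda : z ⬝ᵥ a = 0 := by
    have : z ⬝ᵥ a * ((a ⨯₃ b) ⬝ᵥ (a ⨯₃ b)) = 0 := by
      rw [Enn]; linear_combination (a ⬝ᵥ b) * E1 - (a ⬝ᵥ a) * E2
    rcases mul_eq_zero.mp this with h | h
    · exact h
    · exact absurd h hnn
  have hdb : z ⬝ᵥ b = 0 := by
    have : z ⬝ᵥ b * ((a ⨯₃ b) ⬝ᵥ (a ⨯₃ b)) = 0 := by
      rw [Enn]; linear_combination (b ⬝ᵥ b) * E1 - (a ⬝ᵥ b) * E2
    rcases mul_eq_zero.mp this with h | h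
    · exact h
    · exact absurd h hnn
  have hz0 : z = 0 := dots_zero hnn hda hdb E3
  have := sub_eq_zero.mp (hzdef ▸ hz0)
  exact this

/-- existence and uniqueness of the field of infinitesimal
rotations `w` with `ẋ_μ = w × x_μ` for an infinitesimal isometry `ẋ` of a
smooth surface `x`. -/
theorem stmt13 (x xd : ℝ × ℝ → Fin 3 → ℝ)
    (hx : ContDiff ℝ (⊤ : ℕ∞) x) (hxd : ContDiff ℝ (⊤ : ℕ∞) xd)
    (hreg : ∀ p, LinearIndependent ℝ ![vd1 x p, vd2 x p])
    (hiso : ∀ p, vd1 xd p ⬝ᵥ vd1 x p = 0 ∧ vd2 xd p ⬝ᵥ vd2 x p = 0 ∧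
      vd1 xd p ⬝ᵥ vd2 x p + vd2 xd p ⬝ᵥ vd1 x p = 0) :
    ∃! w : ℝ × ℝ → Fin 3 → ℝ,
      ∀ p, vd1 xd p = w p ⨯₃ vd1 x p ∧ vd2 xd p = w p ⨯₃ vd2 x p := by
  refine ⟨fun p => Wfield (vd1 x p) (vd2 x p) (vd1 xd p) (vd2 xd p), fun p => ?_, ?_⟩
  · exact Wfield_spec (hreg p) (hiso p).1 (hiso p).2.1 (hiso p).2.2
  · intro w' hw'
    funext p
    have h := Wfield_spec (hreg p) (hiso p).1 (hiso p).2.1 (hiso p).2.2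
    exact cross_uniq (hreg p) ((hw' p).1.symm.trans h.1) ((hw' p).2.symm.trans h.2)
end

section
/- Let x : ℝ² → ℝ³ be a smooth doubly periodic surface of the form x(u,v) = u p₁ + v p₂ + x̃(u,v) with x̃ periodic, and let ω, w : ℝ² → ℝ³ be smooth periodic vector fields. Then the mean values over a period cell satisfy ∫⟨ω, D_x w⟩ = ∫⟨w, D_x ω⟩, where D_x w = w_v × x_u − w_u × x_v. -/
open MeasureTheory Matrix

/-- Mean value over the unit cell of the lattice spanned by `T₁, T₂`. -/
noncomputable def cellAvg (T₁ T₂ : ℝ × ℝ) (f : ℝ × ℝ → ℝ) : ℝ :=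
  ∫ s in (0:ℝ)..1, ∫ t in (0:ℝ)..1, f (s • T₁ + t • T₂)

/- ## auxiliary lemmas -/

section Aux

lemma comp_deriv' {f : ℝ × ℝ → Fin 3 → ℝ} (hf : Differentiable ℝ f) (p v : ℝ × ℝ) (i : Fin 3) :
    fderiv ℝ (fun q => f q i) p v = fderiv ℝ f p v i := by
  have h := ((ContinuousLinearMap.proj (R := ℝ) (φ := fun _ : Fin 3 => ℝ) i).hasFDerivAt.comp p
    (hf p).hasFDerivAt).fderiv
  have e : (fun q => f q i)
      = (⇑(ContinuousLinearMap.proj (R := ℝ) (φ := fun _ : Fin 3 => ℝ) i)) ∘ f := rfl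
  rw [e, h]; rfl

lemma fderiv_triple {a b c : ℝ × ℝ → Fin 3 → ℝ} (ha : Differentiable ℝ a)
    (hb : Differentiable ℝ b) (hc : Differentiable ℝ c) (p v : ℝ × ℝ) :
    fderiv ℝ (fun q => a q ⬝ᵥ (b q ⨯₃ c q)) p v
      = fderiv ℝ a p v ⬝ᵥ (b p ⨯₃ c p) + a p ⬝ᵥ (fderiv ℝ b p v ⨯₃ c p)
        + a p ⬝ᵥ (b p ⨯₃ fderiv ℝ c p v) := by
  have hai : ∀ i, Differentiable ℝ (fun q => a q i) := differentiable_pi.mp ha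
  have hbi : ∀ i, Differentiable ℝ (fun q => b q i) := differentiable_pi.mp hb
  have hci : ∀ i, Differentiable ℝ (fun q => c q i) := differentiable_pi.mp hc
  have Dadd : ∀ f g : ℝ × ℝ → ℝ, DifferentiableAt ℝ f p → DifferentiableAt ℝ g p →
      fderiv ℝ (fun q => f q + g q) p v = fderiv ℝ f p v + fderiv ℝ g p v := fun f g hf hg => by
    rw [fderiv_fun_add hf hg]; rfl
  have Dsub : ∀ f g : ℝ × ℝ → ℝ, DifferentiableAt ℝ f p → DifferentiableAt ℝ g p →
      fderiv ℝ (fun q => f q - g q) p v = fderiv ℝ f p v - fderiv ℝ g p v := fun f g hf hg => by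
    rw [fderiv_fun_sub hf hg]; rfl
  have Dmul : ∀ f g : ℝ × ℝ → ℝ, DifferentiableAt ℝ f p → DifferentiableAt ℝ g p →
      fderiv ℝ (fun q => f q * g q) p v = fderiv ℝ f p v * g p + f p * fderiv ℝ g p v :=
    fun f g hf hg => by rw [fderiv_fun_mul hf hg]; simp; ring
  have e : (fun q => a q ⬝ᵥ (b q ⨯₃ c q)) = fun q =>
      a q 0 * (b q 1 * c q 2 - b q 2 * c q 1) + a q 1 * (b q 2 * c q 0 - b q 0 * c q 2)
        + a q 2 * (b q 0 * c q 1 - b q 1 * c q 0) := by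
    funext q; simp [crossProduct, dotProduct, Fin.sum_univ_three]
  rw [e, Dadd _ _ (by fun_prop) (by fun_prop), Dadd _ _ (by fun_prop) (by fun_prop),
    Dmul _ _ (by fun_prop) (by fun_prop), Dmul _ _ (by fun_prop) (by fun_prop),
    Dmul _ _ (by fun_prop) (by fun_prop), Dsub _ _ (by fun_prop) (by fun_prop),
    Dsub _ _ (by fun_prop) (by fun_prop), Dsub _ _ (by fun_prop) (by fun_prop),
    Dmul _ _ (by fun_prop) (by fun_prop), Dmul _ _ (by fun_prop) (by fun_prop),
    Dmul _ _ (by fun_prop) (by fun_prop), Dmul _ _ (by fun_prop) (by fun_prop),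
    Dmul _ _ (by fun_prop) (by fun_prop), Dmul _ _ (by fun_prop) (by fun_prop)]
  simp only [comp_deriv' ha p v, comp_deriv' hb p v, comp_deriv' hc p v]
  simp [crossProduct, dotProduct, Fin.sum_univ_three]
  ring

lemma contDiff_triple {a b c : ℝ × ℝ → Fin 3 → ℝ} (ha : ContDiff ℝ (⊤ : ℕ∞) a)
    (hb : ContDiff ℝ (⊤ : ℕ∞) b) (hc : ContDiff ℝ (⊤ : ℕ∞) c) :
    ContDiff ℝ (⊤ : ℕ∞) (fun q => a q ⬝ᵥ (b q ⨯₃ c q)) := by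
  have hai : ∀ i, ContDiff ℝ (⊤ : ℕ∞) (fun q => a q i) := fun i => contDiff_pi.mp ha i
  have hbi : ∀ i, ContDiff ℝ (⊤ : ℕ∞) (fun q => b q i) := fun i => contDiff_pi.mp hb i
  have hci : ∀ i, ContDiff ℝ (⊤ : ℕ∞) (fun q => c q i) := fun i => contDiff_pi.mp hc i
  have e : (fun q => a q ⬝ᵥ (b q ⨯₃ c q)) = fun q =>
      a q 0 * (b q 1 * c q 2 - b q 2 * c q 1) + a q 1 * (b q 2 * c q 0 - b q 0 * c q 2)
        + a q 2 * (b q 0 * c q 1 - b q 1 * c q 0) := by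
    funext q; simp [crossProduct, dotProduct, Fin.sum_univ_three]
  rw [e]; fun_prop

lemma contDiff_dfield {f : ℝ × ℝ → Fin 3 → ℝ} (hf : ContDiff ℝ (⊤ : ℕ∞) f) (v : ℝ × ℝ) :
    ContDiff ℝ (⊤ : ℕ∞) (fun p => fderiv ℝ f p v) :=
  (hf.fderiv_right (by simp)).clm_apply contDiff_const

lemma contDiff_dfield' {f : ℝ × ℝ → ℝ} (hf : ContDiff ℝ (⊤ : ℕ∞) f) (v : ℝ × ℝ) :
    ContDiff ℝ (⊤ : ℕ∞) (fun p => fderiv ℝ f p v) :=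
  (hf.fderiv_right (by simp)).clm_apply contDiff_const

lemma fderiv_shift {E : Type*} [NormedAddCommGroup E] [NormedSpace ℝ E]
    {f : ℝ × ℝ → E} (hf : Differentiable ℝ f) (T p : ℝ × ℝ) :
    fderiv ℝ (fun q => f (q + T)) p = fderiv ℝ f (p + T) := by
  have h := ((hf (p + T)).hasFDerivAt.comp p ((hasFDerivAt_id p).add_const T)).fderiv
  simp only [id] at h
  rw [show (fun q => f (q + T)) = f ∘ (fun q => q + T) from rfl, h,
    ContinuousLinearMap.comp_id]

end Aux

section Integral

/-- FTC along a segment. -/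
lemma line_int {f : ℝ × ℝ → ℝ} (hf : ContDiff ℝ (⊤ : ℕ∞) f) (c T : ℝ × ℝ) :
    ∫ t in (0:ℝ)..1, fderiv ℝ f (c + t • T) T = f (c + T) - f c := by
  have h : ∀ t ∈ Set.uIcc (0:ℝ) 1, HasDerivAt (fun t : ℝ => f (c + t • T))
      (fderiv ℝ f (c + t • T) T) t := by
    intro t _
    have hγ : HasDerivAt (fun t : ℝ => c + t • T) T t := by
      simpa using (((hasDerivAt_id t).smul_const T).const_add c)
    exact (hf.differentiable (by simp) _).hasFDerivAt.comp_hasDerivAt t hγ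
  have hcont : Continuous fun t : ℝ => fderiv ℝ f (c + t • T) T :=
    (contDiff_dfield' hf T).continuous.comp (by continuity)
  rw [intervalIntegral.integral_eq_sub_of_hasDerivAt h (hcont.intervalIntegrable 0 1)]
  norm_num

lemma avg_DT2_zero {T₁ T₂ : ℝ × ℝ} {f : ℝ × ℝ → ℝ} (hf : ContDiff ℝ (⊤ : ℕ∞) f)
    (hfp : ∀ p, f (p + T₂) = f p) :
    cellAvg T₁ T₂ (fun p => fderiv ℝ f p T₂) = 0 := by
  unfold cellAvg
  have : ∀ s : ℝ, (∫ t in (0:ℝ)..1, fderiv ℝ f (s • T₁ + t • T₂) T₂) = 0 := by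
    intro s
    rw [line_int hf (s • T₁) T₂, hfp, sub_self]
  simp only [this, intervalIntegral.integral_zero]

lemma avg_DT1_zero {T₁ T₂ : ℝ × ℝ} {f : ℝ × ℝ → ℝ} (hf : ContDiff ℝ (⊤ : ℕ∞) f)
    (hfp : ∀ p, f (p + T₁) = f p) :
    cellAvg T₁ T₂ (fun p => fderiv ℝ f p T₁) = 0 := by
  unfold cellAvg
  have hcont : Continuous fun q : ℝ × ℝ => fderiv ℝ f ((q.1 : ℝ) • T₁ + (q.2 : ℝ) • T₂) T₁ :=
    (contDiff_dfield' hf T₁).continuous.comp (by continuity)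
  have hint : Integrable (Function.uncurry fun s t : ℝ =>
      fderiv ℝ f (s • T₁ + t • T₂) T₁)
      ((volume.restrict (Set.Ioc (0:ℝ) 1)).prod (volume.restrict (Set.Ioc (0:ℝ) 1))) := by
    rw [Measure.prod_restrict]
    exact (hcont.continuousOn.integrableOn_compact (isCompact_Icc.prod isCompact_Icc)).mono_set
      (Set.prod_mono Set.Ioc_subset_Icc_self Set.Ioc_subset_Icc_self)
  have key : ∀ t : ℝ, (∫ s in (0:ℝ)..1, fderiv ℝ f (s • T₁ + t • T₂) T₁) = 0 := by
    intro t
    have : (∫ s in (0:ℝ)..1, fderiv ℝ f (s • T₁ + t • T₂) T₁)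
        = ∫ s in (0:ℝ)..1, fderiv ℝ f (t • T₂ + s • T₁) T₁ := by
      apply intervalIntegral.integral_congr; intro s _; dsimp only
      rw [add_comm (s • T₁) (t • T₂)]
    rw [this, line_int hf (t • T₂) T₁, hfp, sub_self]
  calc (∫ s in (0:ℝ)..1, ∫ t in (0:ℝ)..1, fderiv ℝ f (s • T₁ + t • T₂) T₁)
      = ∫ s in Set.Ioc (0:ℝ) 1, ∫ t in Set.Ioc (0:ℝ) 1,
          fderiv ℝ f (s • T₁ + t • T₂) T₁ := by
        rw [intervalIntegral.integral_of_le zero_le_one]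
        congr 1; funext s; rw [intervalIntegral.integral_of_le zero_le_one]
    _ = ∫ t in Set.Ioc (0:ℝ) 1, ∫ s in Set.Ioc (0:ℝ) 1,
          fderiv ℝ f (s • T₁ + t • T₂) T₁ := integral_integral_swap hint
    _ = 0 := by
        have : ∀ t : ℝ, (∫ s in Set.Ioc (0:ℝ) 1, fderiv ℝ f (s • T₁ + t • T₂) T₁) = 0 := by
          intro t
          rw [← intervalIntegral.integral_of_le zero_le_one]
          exact key t
        simp only [this, integral_zero]

lemma cellAvg_sub {T₁ T₂ : ℝ × ℝ} {f g : ℝ × ℝ → ℝ} (hf : Continuous f) (hg : Continuous g) :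
    cellAvg T₁ T₂ (fun p => f p - g p) = cellAvg T₁ T₂ f - cellAvg T₁ T₂ g := by
  unfold cellAvg
  have hfc : ∀ s : ℝ, Continuous fun t : ℝ => f (s • T₁ + t • T₂) :=
    fun s => hf.comp (by continuity)
  have hgc : ∀ s : ℝ, Continuous fun t : ℝ => g (s • T₁ + t • T₂) :=
    fun s => hg.comp (by continuity)
  have inner : ∀ s : ℝ, (∫ t in (0:ℝ)..1, (f (s • T₁ + t • T₂) - g (s • T₁ + t • T₂)))
      = (∫ t in (0:ℝ)..1, f (s • T₁ + t • T₂)) - ∫ t in (0:ℝ)..1, g (s • T₁ + t • T₂) :=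
    fun s => intervalIntegral.integral_sub ((hfc s).intervalIntegrable 0 1)
      ((hgc s).intervalIntegrable 0 1)
  simp only [inner]
  apply intervalIntegral.integral_sub
  · exact (intervalIntegral.continuous_parametric_intervalIntegral_of_continuous'
      (by fun_prop) 0 1).intervalIntegrable 0 1
  · exact (intervalIntegral.continuous_parametric_intervalIntegral_of_continuous'
      (by fun_prop) 0 1).intervalIntegrable 0 1

lemma cellAvg_add {T₁ T₂ : ℝ × ℝ} {f g : ℝ × ℝ → ℝ} (hf : Continuous f) (hg : Continuous g) :
    cellAvg T₁ T₂ (fun p => f p + g p) = cellAvg T₁ T₂ f + cellAvg T₁ T₂ g := by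
  unfold cellAvg
  have inner : ∀ s : ℝ, (∫ t in (0:ℝ)..1, (f (s • T₁ + t • T₂) + g (s • T₁ + t • T₂)))
      = (∫ t in (0:ℝ)..1, f (s • T₁ + t • T₂)) + ∫ t in (0:ℝ)..1, g (s • T₁ + t • T₂) :=
    fun s => intervalIntegral.integral_add
      ((hf.comp (by continuity : Continuous fun t : ℝ => s • T₁ + t • T₂)).intervalIntegrable 0 1)
      ((hg.comp (by continuity : Continuous fun t : ℝ => s • T₁ + t • T₂)).intervalIntegrable 0 1)
  simp only [inner]
  apply intervalIntegral.integral_add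
  · exact (intervalIntegral.continuous_parametric_intervalIntegral_of_continuous'
      (by fun_prop) 0 1).intervalIntegrable 0 1
  · exact (intervalIntegral.continuous_parametric_intervalIntegral_of_continuous'
      (by fun_prop) 0 1).intervalIntegrable 0 1

lemma cellAvg_const_mul {T₁ T₂ : ℝ × ℝ} (r : ℝ) (f : ℝ × ℝ → ℝ) :
    cellAvg T₁ T₂ (fun p => r * f p) = r * cellAvg T₁ T₂ f := by
  unfold cellAvg
  simp only [intervalIntegral.integral_const_mul]

lemma cellAvg_congr {T₁ T₂ : ℝ × ℝ} {f g : ℝ × ℝ → ℝ} (h : ∀ p, f p = g p) :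
    cellAvg T₁ T₂ f = cellAvg T₁ T₂ g := by
  unfold cellAvg; simp only [h]

/-- master lemma : the mean of any directional derivative of a doubly-periodic
smooth function vanishes. -/
lemma avg_D_zero {T₁ T₂ : ℝ × ℝ} (hT : LinearIndependent ℝ ![T₁, T₂])
    {f : ℝ × ℝ → ℝ} (hf : ContDiff ℝ (⊤ : ℕ∞) f)
    (hfp : ∀ p, f (p + T₁) = f p ∧ f (p + T₂) = f p) (v : ℝ × ℝ) :
    cellAvg T₁ T₂ (fun p => fderiv ℝ f p v) = 0 := by
  obtain ⟨α, β, hv⟩ : ∃ α β : ℝ, v = α • T₁ + β • T₂ := by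
    have card : Fintype.card (Fin 2) = Module.finrank ℝ (ℝ × ℝ) := by simp
    let B := basisOfLinearIndependentOfCardEqFinrank hT card
    refine ⟨B.repr v 0, B.repr v 1, ?_⟩
    have h := B.sum_repr v
    rw [Fin.sum_univ_two] at h
    have h0 : B 0 = T₁ := by
      rw [show B 0 = ![T₁, T₂] 0 from congrFun (coe_basisOfLinearIndependentOfCardEqFinrank hT card) 0]
      simp
    have h1 : B 1 = T₂ := by
      rw [show B 1 = ![T₁, T₂] 1 from congrFun (coe_basisOfLinearIndependentOfCardEqFinrank hT card) 1]
      simp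
    rw [h0, h1] at h
    exact h.symm
  have hdiff := hf.differentiable (by simp)
  have hpt : ∀ p, fderiv ℝ f p v
      = α * fderiv ℝ f p T₁ + β * fderiv ℝ f p T₂ := by
    intro p
    rw [hv]
    simp [smul_eq_mul]
  have hc1 : Continuous fun p => fderiv ℝ f p T₁ := (contDiff_dfield' hf T₁).continuous
  have hc2 : Continuous fun p => fderiv ℝ f p T₂ := (contDiff_dfield' hf T₂).continuous
  rw [cellAvg_congr hpt, cellAvg_add (by fun_prop) (by fun_prop)]
  · rw [cellAvg_const_mul, cellAvg_const_mul, avg_DT1_zero hf (fun p => (hfp p).1),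
      avg_DT2_zero hf (fun p => (hfp p).2)]
    ring

/-- self-adjointness of the Darboux operator
`D_x w = w_v × x_u − w_u × x_v` on periodic fields, for a smooth periodic
surface `x(u,v) = u p₁ + v p₂ + x̃(u,v)`. -/
theorem stmt15 (T₁ T₂ : ℝ × ℝ) (hT : LinearIndependent ℝ ![T₁, T₂])
    (p₁ p₂ : Fin 3 → ℝ) (hp : LinearIndependent ℝ ![p₁, p₂])
    (xt ω w : ℝ × ℝ → Fin 3 → ℝ)
    (hxt : ContDiff ℝ (⊤ : ℕ∞) xt) (hω : ContDiff ℝ (⊤ : ℕ∞) ω) (hw : ContDiff ℝ (⊤ : ℕ∞) w)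
    (hxtp : ∀ p, xt (p + T₁) = xt p ∧ xt (p + T₂) = xt p)
    (hωp : ∀ p, ω (p + T₁) = ω p ∧ ω (p + T₂) = ω p)
    (hwp : ∀ p, w (p + T₁) = w p ∧ w (p + T₂) = w p) :
    cellAvg T₁ T₂ (fun p => ω p ⬝ᵥ
        (vd2 w p ⨯₃ vd1 (fun q => q.1 • p₁ + q.2 • p₂ + xt q) p
          - vd1 w p ⨯₃ vd2 (fun q => q.1 • p₁ + q.2 • p₂ + xt q) p))
      = cellAvg T₁ T₂ (fun p => w p ⬝ᵥ
        (vd2 ω p ⨯₃ vd1 (fun q => q.1 • p₁ + q.2 • p₂ + xt q) p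
          - vd1 ω p ⨯₃ vd2 (fun q => q.1 • p₁ + q.2 • p₂ + xt q) p)) := by
  set x : ℝ × ℝ → Fin 3 → ℝ := fun q => q.1 • p₁ + q.2 • p₂ + xt q with hxdef
  have hx : ContDiff ℝ (⊤ : ℕ∞) x := by
    apply ContDiff.add _ hxt
    exact (contDiff_fst.smul contDiff_const).add (contDiff_snd.smul contDiff_const)
  have hdx : Differentiable ℝ x := hx.differentiable (by simp)
  have hdω : Differentiable ℝ ω := hω.differentiable (by simp)
  have hdw : Differentiable ℝ w := hw.differentiable (by simp)
  -- the two tangent fields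
  set X₁ : ℝ × ℝ → Fin 3 → ℝ := fun p => fderiv ℝ x p (1, 0) with hX₁def
  set X₂ : ℝ × ℝ → Fin 3 → ℝ := fun p => fderiv ℝ x p (0, 1) with hX₂def
  have hX₁ : ContDiff ℝ (⊤ : ℕ∞) X₁ := contDiff_dfield hx (1, 0)
  have hX₂ : ContDiff ℝ (⊤ : ℕ∞) X₂ := contDiff_dfield hx (0, 1)
  -- periodicity of the tangent fields
  have hxshift : ∀ T : ℝ × ℝ, (∀ q, xt (q + T) = xt q) →
      ∀ p, fderiv ℝ x (p + T) = fderiv ℝ x p := by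
    intro T hTp p
    have e : (fun q => x (q + T)) = fun q => x q + (T.1 • p₁ + T.2 • p₂) := by
      funext q
      simp only [hxdef, Prod.fst_add, Prod.snd_add, add_smul, hTp q]
      abel
    rw [← fderiv_shift hdx T p, e, fderiv_add_const]
  have hX₁p : ∀ p, X₁ (p + T₁) = X₁ p ∧ X₁ (p + T₂) = X₁ p := fun p =>
    ⟨by show fderiv ℝ x (p + T₁) (1, 0) = fderiv ℝ x p (1, 0); rw [hxshift T₁ (fun q => (hxtp q).1) p],
     by show fderiv ℝ x (p + T₂) (1, 0) = fderiv ℝ x p (1, 0); rw [hxshift T₂ (fun q => (hxtp q).2) p]⟩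
  have hX₂p : ∀ p, X₂ (p + T₁) = X₂ p ∧ X₂ (p + T₂) = X₂ p := fun p =>
    ⟨by show fderiv ℝ x (p + T₁) (0, 1) = fderiv ℝ x p (0, 1); rw [hxshift T₁ (fun q => (hxtp q).1) p],
     by show fderiv ℝ x (p + T₂) (0, 1) = fderiv ℝ x p (0, 1); rw [hxshift T₂ (fun q => (hxtp q).2) p]⟩
  -- the two auxiliary scalar functions
  set F : ℝ × ℝ → ℝ := fun p => ω p ⬝ᵥ (w p ⨯₃ X₁ p) with hFdef
  set G : ℝ × ℝ → ℝ := fun p => ω p ⬝ᵥ (w p ⨯₃ X₂ p) with hGdef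
  have hF : ContDiff ℝ (⊤ : ℕ∞) F := contDiff_triple hω hw hX₁
  have hG : ContDiff ℝ (⊤ : ℕ∞) G := contDiff_triple hω hw hX₂
  have hFp : ∀ p, F (p + T₁) = F p ∧ F (p + T₂) = F p := fun p =>
    ⟨by simp only [hFdef, (hωp p).1, (hwp p).1, (hX₁p p).1],
     by simp only [hFdef, (hωp p).2, (hwp p).2, (hX₁p p).2]⟩
  have hGp : ∀ p, G (p + T₁) = G p ∧ G (p + T₂) = G p := fun p =>
    ⟨by simp only [hGdef, (hωp p).1, (hwp p).1, (hX₂p p).1],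
     by simp only [hGdef, (hωp p).2, (hwp p).2, (hX₂p p).2]⟩
  -- symmetry of second derivatives : D₂ X₁ = D₁ X₂
  have key : ∀ p, fderiv ℝ X₁ p (0, 1) = fderiv ℝ X₂ p (1, 0) := by
    intro p
    funext i
    have hxi : ContDiff ℝ (⊤ : ℕ∞) (fun r => x r i) := contDiff_pi.mp hx i
    have hdxi : Differentiable ℝ (fun r => x r i) := hxi.differentiable (by simp)
    have e₁ : (fun q => X₁ q i) = fun q => fderiv ℝ (fun r => x r i) q (1, 0) := by
      funext q; rw [comp_deriv' hdx q (1, 0) i]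
    have e₂ : (fun q => X₂ q i) = fun q => fderiv ℝ (fun r => x r i) q (0, 1) := by
      funext q; rw [comp_deriv' hdx q (0, 1) i]
    have hd2 : DifferentiableAt ℝ (fderiv ℝ (fun r => x r i)) p :=
      ((hxi.fderiv_right (m := (⊤ : ℕ∞)) (by simp)).differentiable (by simp)) p
    have swap : ∀ u v : ℝ × ℝ, fderiv ℝ (fun q => fderiv ℝ (fun r => x r i) q u) p v
        = fderiv ℝ (fderiv ℝ (fun r => x r i)) p v u := by
      intro u v
      rw [fderiv_clm_apply hd2 (differentiableAt_const u)]
      simp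
    have symm := (hxi.contDiffAt (x := p)).isSymmSndFDerivAt (by rw [minSmoothness_of_isRCLikeNormedField]; exact WithTop.coe_le_coe.mpr le_top)
    calc fderiv ℝ X₁ p (0, 1) i
        = fderiv ℝ (fun q => X₁ q i) p (0, 1) := (comp_deriv' (hX₁.differentiable (by simp)) p (0, 1) i).symm
      _ = fderiv ℝ (fderiv ℝ (fun r => x r i)) p (0, 1) (1, 0) := by rw [e₁, swap]
      _ = fderiv ℝ (fderiv ℝ (fun r => x r i)) p (1, 0) (0, 1) := symm _ _
      _ = fderiv ℝ (fun q => X₂ q i) p (1, 0) := by rw [e₂, swap]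
      _ = fderiv ℝ X₂ p (1, 0) i := comp_deriv' (hX₂.differentiable (by simp)) p (1, 0) i
  -- pointwise divergence identity
  have hpt : ∀ p,
      (ω p ⬝ᵥ (fderiv ℝ w p (0, 1) ⨯₃ X₁ p) - ω p ⬝ᵥ (fderiv ℝ w p (1, 0) ⨯₃ X₂ p))
        - (w p ⬝ᵥ (fderiv ℝ ω p (0, 1) ⨯₃ X₁ p) - w p ⬝ᵥ (fderiv ℝ ω p (1, 0) ⨯₃ X₂ p))
      = fderiv ℝ F p (0, 1) - fderiv ℝ G p (1, 0) := by
    intro p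
    rw [hFdef, hGdef, fderiv_triple hdω hdw (hX₁.differentiable (by simp)) p (0, 1),
      fderiv_triple hdω hdw (hX₂.differentiable (by simp)) p (1, 0), key p]
    generalize ω p = A; generalize w p = B; generalize X₁ p = C₁; generalize X₂ p = C₂
    generalize fderiv ℝ ω p (0, 1) = dω₂; generalize fderiv ℝ ω p (1, 0) = dω₁
    generalize fderiv ℝ w p (0, 1) = dw₂; generalize fderiv ℝ w p (1, 0) = dw₁
    generalize fderiv ℝ X₂ p (1, 0) = M
    simp [crossProduct, dotProduct, Fin.sum_univ_three]
    ring
  -- continuity facts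
  have cA1 : Continuous fun p => ω p ⬝ᵥ (fderiv ℝ w p (0, 1) ⨯₃ X₁ p) :=
    (contDiff_triple hω (contDiff_dfield hw (0, 1)) hX₁).continuous
  have cA2 : Continuous fun p => ω p ⬝ᵥ (fderiv ℝ w p (1, 0) ⨯₃ X₂ p) :=
    (contDiff_triple hω (contDiff_dfield hw (1, 0)) hX₂).continuous
  have cB1 : Continuous fun p => w p ⬝ᵥ (fderiv ℝ ω p (0, 1) ⨯₃ X₁ p) :=
    (contDiff_triple hw (contDiff_dfield hω (0, 1)) hX₁).continuous
  have cB2 : Continuous fun p => w p ⬝ᵥ (fderiv ℝ ω p (1, 0) ⨯₃ X₂ p) :=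
    (contDiff_triple hw (contDiff_dfield hω (1, 0)) hX₂).continuous
  have cDF : Continuous fun p => fderiv ℝ F p (0, 1) := (contDiff_dfield' hF (0, 1)).continuous
  have cDG : Continuous fun p => fderiv ℝ G p (1, 0) := (contDiff_dfield' hG (1, 0)).continuous
  -- rewrite the two sides
  have lhs_eq : cellAvg T₁ T₂ (fun p => ω p ⬝ᵥ
        (vd2 w p ⨯₃ vd1 x p - vd1 w p ⨯₃ vd2 x p))
      = cellAvg T₁ T₂ (fun p => ω p ⬝ᵥ (fderiv ℝ w p (0, 1) ⨯₃ X₁ p))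
        - cellAvg T₁ T₂ (fun p => ω p ⬝ᵥ (fderiv ℝ w p (1, 0) ⨯₃ X₂ p)) := by
    rw [← cellAvg_sub cA1 cA2]
    apply cellAvg_congr
    intro p
    simp only [vd1, vd2, dotProduct_sub]; rfl
  have rhs_eq : cellAvg T₁ T₂ (fun p => w p ⬝ᵥ
        (vd2 ω p ⨯₃ vd1 x p - vd1 ω p ⨯₃ vd2 x p))
      = cellAvg T₁ T₂ (fun p => w p ⬝ᵥ (fderiv ℝ ω p (0, 1) ⨯₃ X₁ p))
        - cellAvg T₁ T₂ (fun p => w p ⬝ᵥ (fderiv ℝ ω p (1, 0) ⨯₃ X₂ p)) := by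
    rw [← cellAvg_sub cB1 cB2]
    apply cellAvg_congr
    intro p
    simp only [vd1, vd2, dotProduct_sub]; rfl
  rw [lhs_eq, rhs_eq]
  have main : (cellAvg T₁ T₂ (fun p => ω p ⬝ᵥ (fderiv ℝ w p (0, 1) ⨯₃ X₁ p))
        - cellAvg T₁ T₂ (fun p => ω p ⬝ᵥ (fderiv ℝ w p (1, 0) ⨯₃ X₂ p)))
      - (cellAvg T₁ T₂ (fun p => w p ⬝ᵥ (fderiv ℝ ω p (0, 1) ⨯₃ X₁ p))
        - cellAvg T₁ T₂ (fun p => w p ⬝ᵥ (fderiv ℝ ω p (1, 0) ⨯₃ X₂ p))) = 0 := by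
    rw [← cellAvg_sub cA1 cA2, ← cellAvg_sub cB1 cB2,
      ← cellAvg_sub (f := fun p => ω p ⬝ᵥ (fderiv ℝ w p (0, 1) ⨯₃ X₁ p) - ω p ⬝ᵥ (fderiv ℝ w p (1, 0) ⨯₃ X₂ p))
        (g := fun p => w p ⬝ᵥ (fderiv ℝ ω p (0, 1) ⨯₃ X₁ p) - w p ⬝ᵥ (fderiv ℝ ω p (1, 0) ⨯₃ X₂ p)) (cA1.sub cA2) (cB1.sub cB2), cellAvg_congr hpt,
      cellAvg_sub cDF cDG, avg_D_zero hT hF hFp (0, 1), avg_D_zero hT hG hGp (1, 0)]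
    ring
  linarith
end Integral
end
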